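/- Let {x_k} be a sequence of real-valued random variables, let m ≥ 1 be a positive integer, and for a fixed k ≥ m let the m-step prediction be x̂_k = f_k(x_0, …, x_{k−m}) for a measurable function f_k. Assume the prediction error x_k − x̂_k has a probability density function with compact support and all differential entropies below are well defined and finite. Then |supp(x_k − x̂_k)| ≥ 2^{h(x_k | x_0,…,x_{k−m})}, and equality holds if and only if x_k − x̂_k is uniformly distributed on its support and I(x_k − x̂_k; (x_0,…,x_{k−m})) = 0. -/

import Mathlib

open MeasureTheory Filter ProbabilityTheory

noncomputable section

/-- Differential entropy (base 2) of a random variable `X : Ω → E` under `P`,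
computed from the density of its distribution w.r.t. the reference (volume) measure. -/
def dEnt {Ω E : Type*} [MeasurableSpace Ω] [MeasureSpace E]
    (P : Measure Ω) (X : Ω → E) : ℝ :=
  -∫ t, ((P.map X).rnDeriv volume t).toReal * Real.logb 2 ((P.map X).rnDeriv volume t).toReal

/-- Conditional differential entropy `h(X | Y) = h(X, Y) - h(Y)`. -/
def condEnt {Ω E F : Type*} [MeasurableSpace Ω] [MeasureSpace E] [MeasureSpace F]
    (P : Measure Ω) (X : Ω → E) (Y : Ω → F) : ℝ :=
  dEnt P (fun ω => (X ω, Y ω)) - dEnt P Y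

/-- Mutual information `I(X; Y) = h(X) + h(Y) - h(X, Y)`. -/
def mutInfo {Ω E F : Type*} [MeasurableSpace Ω] [MeasureSpace E] [MeasureSpace F]
    (P : Measure Ω) (X : Ω → E) (Y : Ω → F) : ℝ :=
  dEnt P X + dEnt P Y - dEnt P (fun ω => (X ω, Y ω))

/-- Conditional mutual information `I(X; Y | Z) = h(X | Z) - h(X | Y, Z)`. -/
def condMutInfo {Ω E F G : Type*} [MeasurableSpace Ω] [MeasureSpace E] [MeasureSpace F]
    [MeasureSpace G] (P : Measure Ω) (X : Ω → E) (Y : Ω → F) (Z : Ω → G) : ℝ :=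
  condEnt P X Z - condEnt P X (fun ω => (Y ω, Z ω))

/-- The differential entropy of `X` is well defined (a density exists and the
entropy integral converges). -/
def entWellDef {Ω E : Type*} [MeasurableSpace Ω] [MeasureSpace E]
    (P : Measure Ω) (X : Ω → E) : Prop :=
  HasPDF X P volume ∧
    Integrable (fun t =>
      ((P.map X).rnDeriv volume t).toReal * Real.logb 2 ((P.map X).rnDeriv volume t).toReal)

/-- The (topological) support of the distribution of a real random variable. -/
def mSupp {Ω : Type*} [MeasurableSpace Ω] (P : Measure Ω) (X : Ω → ℝ) : Set ℝ :=
  {e | ∀ U ∈ nhds e, P.map X U ≠ 0}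

/-- The length (Lebesgue measure) of the support of the distribution of `X`. -/
def suppLen {Ω : Type*} [MeasurableSpace Ω] (P : Measure Ω) (X : Ω → ℝ) : ℝ :=
  (volume (mSupp P X)).toReal

/-- Maximum deviation of `X` from its mean, over the support of its distribution. -/
def Dmax {Ω : Type*} [MeasurableSpace Ω] (P : Measure Ω) (X : Ω → ℝ) : ℝ :=
  sSup ((fun e => |e - ∫ ω, X ω ∂P|) '' mSupp P X)

/-- `X` is uniformly distributed on the support of its distribution. -/
def UnifOnSupp {Ω : Type*} [MeasurableSpace Ω] (P : Measure Ω) (X : Ω → ℝ) : Prop :=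
  pdf.IsUniform X (mSupp P X) P

end

/-!
Write `e = x_k - f(past)`. The shear `(a, b) ↦ (a + f b, b)` preserves Lebesgue measure, so
`h(x_k, past) = h(e, past)` and therefore `h(x_k | past) = h(e) - I(e; past)`. Mutual information
is nonnegative (Gibbs' inequality against the product of the marginal densities), and
`h(e) ≤ log₂ |supp e|` (Gibbs' inequality against the uniform density on the support), with
equality exactly for the uniform law. Hence `2 ^ h(x_k | past) ≤ 2 ^ h(e) ≤ |supp e|`, with
equality iff both inequalities are tight.
-/

open Real
open scoped ENNReal

namespace Real

lemma mul_log_sub_mul_log_lt_sub {p q : ℝ} (hp : 0 ≤ p) (hq : 0 ≤ q) (hpq : q = 0 → p = 0)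
    (hne : p ≠ q) : p * log q - p * log p < q - p := by
  rcases hp.eq_or_lt with rfl | hp
  · simpa using hq.lt_of_ne hne
  have hq : 0 < q := hq.lt_of_ne fun h => hp.ne' (hpq h.symm)
  have hlog : log (q / p) < q / p - 1 :=
    log_lt_sub_one_of_pos (div_pos hq hp) (by rwa [ne_eq, div_eq_one_iff_eq hp.ne', eq_comm])
  rw [log_div hq.ne' hp.ne'] at hlog
  calc p * log q - p * log p = p * (log q - log p) := by ring
    _ < p * (q / p - 1) := mul_lt_mul_of_pos_left hlog hp
    _ = q - p := by field_simp

lemma mul_log_sub_mul_log_le_sub {p q : ℝ} (hp : 0 ≤ p) (hq : 0 ≤ q) (hpq : q = 0 → p = 0) :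
    p * log q - p * log p ≤ q - p := by
  rcases eq_or_ne p q with rfl | hne
  · simp
  · exact (mul_log_sub_mul_log_lt_sub hp hq hpq hne).le

lemma rpow_sub_le_of_le_logb {b a c L : ℝ} (hb : 1 < b) (hL : 0 < L) (ha : a ≤ logb b L)
    (hc : 0 ≤ c) : b ^ (a - c) ≤ L :=
  (le_logb_iff_rpow_le hb hL).mp (by linarith)

lemma rpow_sub_eq_iff_of_le_logb {b a c L : ℝ} (hb : 1 < b) (hL : 0 < L) (ha : a ≤ logb b L)
    (hc : 0 ≤ c) : b ^ (a - c) = L ↔ a = logb b L ∧ c = 0 := by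
  constructor
  · intro h
    have : a - c = logb b L := by rw [← h, logb_rpow (by linarith) hb.ne']
    constructor <;> linarith
  · rintro ⟨rfl, rfl⟩
    rw [sub_zero, rpow_logb (by linarith) hb.ne' hL]

end Real

section Gibbs

variable {α : Type*} [MeasurableSpace α] {ν : Measure α} {p q : α → ℝ}

lemma integral_mul_log_sub_le_integral_sub (hp : 0 ≤ᵐ[ν] p) (hq : 0 ≤ᵐ[ν] q)
    (hpq : ∀ᵐ x ∂ν, q x = 0 → p x = 0) (hpi : Integrable p ν) (hqi : Integrable q ν)
    (hplogp : Integrable (fun x => p x * log (p x)) ν)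
    (hplogq : Integrable (fun x => p x * log (q x)) ν) :
    ∫ x, p x * log (q x) ∂ν - ∫ x, p x * log (p x) ∂ν ≤ ∫ x, q x ∂ν - ∫ x, p x ∂ν := by
  rw [← integral_sub hplogq hplogp, ← integral_sub hqi hpi]
  refine integral_mono_ae (hplogq.sub hplogp) (hqi.sub hpi) ?_
  filter_upwards [hp, hq, hpq] with x hpx hqx hpqx
  exact mul_log_sub_mul_log_le_sub hpx hqx hpqx

lemma ae_eq_of_integral_mul_log_sub_eq_integral_sub (hp : 0 ≤ᵐ[ν] p) (hq : 0 ≤ᵐ[ν] q)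
    (hpq : ∀ᵐ x ∂ν, q x = 0 → p x = 0) (hpi : Integrable p ν) (hqi : Integrable q ν)
    (hplogp : Integrable (fun x => p x * log (p x)) ν)
    (hplogq : Integrable (fun x => p x * log (q x)) ν)
    (h : ∫ x, p x * log (q x) ∂ν - ∫ x, p x * log (p x) ∂ν = ∫ x, q x ∂ν - ∫ x, p x ∂ν) :
    p =ᵐ[ν] q := by
  set gap : α → ℝ := fun x => (q x - p x) - (p x * log (q x) - p x * log (p x))
  have hgap_nonneg : 0 ≤ᵐ[ν] gap := by
    filter_upwards [hp, hq, hpq] with x hpx hqx hpqx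
    exact sub_nonneg.mpr (mul_log_sub_mul_log_le_sub hpx hqx hpqx)
  have hqp : Integrable (fun x => q x - p x) ν := hqi.sub hpi
  have hlog : Integrable (fun x => p x * log (q x) - p x * log (p x)) ν := hplogq.sub hplogp
  have hgap_integral : ∫ x, gap x ∂ν = 0 := by
    rw [integral_sub hqp hlog, integral_sub hqi hpi, integral_sub hplogq hplogp, h, sub_self]
  have hgap_zero : gap =ᵐ[ν] 0 :=
    (integral_eq_zero_iff_of_nonneg_ae hgap_nonneg (hqp.sub hlog)).mp hgap_integral
  filter_upwards [hp, hq, hpq, hgap_zero] with x hpx hqx hpqx hx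
  by_contra hne
  exact (sub_pos.mpr (mul_log_sub_mul_log_lt_sub hpx hqx hpqx hne)).ne' hx

end Gibbs

section Entropy

variable {α β : Type*} [MeasurableSpace α] [MeasurableSpace β]

noncomputable def diffEntropy (μ ν : Measure α) : ℝ :=
  -∫ x, (μ.rnDeriv ν x).toReal * log (μ.rnDeriv ν x).toReal ∂ν

namespace MeasureTheory.Measure

variable {μ ν : Measure α}

lemma ae_toReal_rnDeriv_ne_zero_imp_of_ae [SigmaFinite μ] [SigmaFinite ν] {P : α → Prop}
    (h : ∀ᵐ x ∂μ, P x) : ∀ᵐ x ∂ν, (μ.rnDeriv ν x).toReal ≠ 0 → P x := by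
  filter_upwards [ae_rnDeriv_ne_zero_imp_of_ae ν h] with x hx hne
  exact hx (ENNReal.toReal_ne_zero.mp hne).1

lemma ae_toReal_rnDeriv_pos [SigmaFinite μ] [SigmaFinite ν] (hμν : μ ≪ ν) :
    ∀ᵐ x ∂μ, 0 < (μ.rnDeriv ν x).toReal := by
  filter_upwards [rnDeriv_pos hμν, hμν.ae_le (rnDeriv_lt_top μ ν)] with x hpos htop
  exact ENNReal.toReal_pos hpos.ne' htop.ne

end MeasureTheory.Measure

lemma ProbabilityTheory.cond_eq_withDensity {ν : Measure α} {s : Set α} (hs : MeasurableSet s) :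
    ν[|s] = ν.withDensity (s.indicator fun _ => (ν s)⁻¹) := by
  rw [withDensity_indicator hs, withDensity_const]
  rfl

section MaximumEntropy

variable {μ ν : Measure α} {s : Set α}

lemma diffEntropy_cond_self [SigmaFinite ν] (hs : MeasurableSet s) (hν₀ : ν s ≠ 0) (hν : ν s ≠ ∞) :
    diffEntropy ν[|s] ν = log (ν.real s) := by
  have hdens : ∀ᵐ x ∂ν, (ν[|s].rnDeriv ν x).toReal * log (ν[|s].rnDeriv ν x).toReal =
      s.indicator (fun _ => (ν.real s)⁻¹ * log (ν.real s)⁻¹) x := by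
    rw [cond_eq_withDensity hs]
    filter_upwards [Measure.rnDeriv_withDensity ν ((measurable_const (a := (ν s)⁻¹)).indicator hs)]
      with x hx
    by_cases hxs : x ∈ s <;> simp [hx, hxs, measureReal_def]
  have hL : ν.real s ≠ 0 := ENNReal.toReal_ne_zero.mpr ⟨hν₀, hν⟩
  rw [diffEntropy, integral_congr_ae hdens, integral_indicator_const _ hs, smul_eq_mul, log_inv,
    ← mul_assoc, mul_inv_cancel₀ hL]
  ring

lemma integrable_toReal_rnDeriv_mul_log_indicator [IsFiniteMeasure μ] (hs : MeasurableSet s)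
    (c : ℝ) :
    Integrable (fun x => (μ.rnDeriv ν x).toReal * log (s.indicator (fun _ => c) x)) ν := by
  have hρ : Integrable (fun x => (μ.rnDeriv ν x).toReal) ν := Measure.integrable_toReal_rnDeriv
  refine ((hρ.mul_const (log c)).indicator hs).congr (ae_of_all _ fun x => ?_)
  by_cases hxs : x ∈ s <;> simp [hxs]

lemma integral_toReal_rnDeriv_mul_log_indicator [IsProbabilityMeasure μ] [SigmaFinite ν]
    (hμν : μ ≪ ν) (hs : MeasurableSet s) (hμs : μ sᶜ = 0) (c : ℝ) :
    ∫ x, (μ.rnDeriv ν x).toReal * log (s.indicator (fun _ => c) x) ∂ν = log c := by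
  have hμs' : μ.real s = 1 := by simp [measureReal_def, (prob_compl_eq_zero_iff hs).mp hμs]
  calc ∫ x, (μ.rnDeriv ν x).toReal * log (s.indicator (fun _ => c) x) ∂ν
      = ∫ x, s.indicator (fun x => (μ.rnDeriv ν x).toReal * log c) x ∂ν := by
        -- off `s` both integrands vanish, the left one because `log 0 = 0`
        refine integral_congr_ae (ae_of_all _ fun x => ?_)
        by_cases hxs : x ∈ s <;> simp [hxs]
    _ = log c := by
        rw [integral_indicator hs, integral_mul_const, Measure.setIntegral_toReal_rnDeriv hμν,
          hμs', one_mul]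

lemma eq_cond_of_toReal_rnDeriv_ae_eq_indicator [IsFiniteMeasure μ] [SigmaFinite ν] (hμν : μ ≪ ν)
    (hs : MeasurableSet s) (hν₀ : ν s ≠ 0)
    (h : (fun x => (μ.rnDeriv ν x).toReal) =ᵐ[ν] s.indicator fun _ => (ν.real s)⁻¹) :
    μ = ν[|s] := by
  rw [cond_eq_withDensity hs, ← Measure.withDensity_rnDeriv_eq μ ν hμν]
  refine withDensity_congr_ae ?_
  filter_upwards [h, Measure.rnDeriv_lt_top μ ν] with x hx htop
  by_cases hxs : x ∈ s
  · rw [Set.indicator_of_mem hxs] at hx ⊢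
    rwa [measureReal_def, ← ENNReal.toReal_inv,
      ENNReal.toReal_eq_toReal_iff' htop.ne (ENNReal.inv_ne_top.mpr hν₀)] at hx
  · rw [Set.indicator_of_notMem hxs] at hx ⊢
    exact (ENNReal.toReal_eq_zero_iff _).mp hx |>.resolve_right htop.ne

theorem diffEntropy_le_log_measureReal [IsProbabilityMeasure μ] [SigmaFinite ν] (hμν : μ ≪ ν)
    (hs : MeasurableSet s) (hμs : μ sᶜ = 0) (hν : ν s ≠ ∞)
    (hint : Integrable (fun x => (μ.rnDeriv ν x).toReal * log (μ.rnDeriv ν x).toReal) ν) :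
    diffEntropy μ ν ≤ log (ν.real s) ∧ (diffEntropy μ ν = log (ν.real s) → μ = ν[|s]) := by
  set p : α → ℝ := fun x => (μ.rnDeriv ν x).toReal
  set q : α → ℝ := s.indicator fun _ => (ν.real s)⁻¹
  have hν₀ : ν s ≠ 0 := fun h => by
    simpa [hμν h] using (prob_compl_eq_zero_iff hs).mp hμs
  have hL : 0 < ν.real s := ENNReal.toReal_pos hν₀ hν
  have hp : 0 ≤ᵐ[ν] p := ae_of_all _ fun _ => ENNReal.toReal_nonneg
  have hq : 0 ≤ᵐ[ν] q := ae_of_all _ (Set.indicator_nonneg fun _ _ => inv_nonneg.mpr hL.le)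
  have hpq : ∀ᵐ x ∂ν, q x = 0 → p x = 0 := by
    filter_upwards [Measure.ae_toReal_rnDeriv_ne_zero_imp_of_ae (mem_ae_iff.mpr hμs)]
      with x hx hqx
    by_contra hpx
    simp [q, Set.indicator_of_mem (hx hpx), hL.ne'] at hqx
  have hqi : Integrable q ν := (integrableOn_const hν).integrable_indicator hs
  have hpi : Integrable p ν := Measure.integrable_toReal_rnDeriv
  have hplogq := integrable_toReal_rnDeriv_mul_log_indicator (μ := μ) (ν := ν) hs (ν.real s)⁻¹
  have hcross : ∫ x, p x * log (q x) ∂ν - ∫ x, p x * log (p x) ∂ν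
      = diffEntropy μ ν - log (ν.real s) := by
    rw [integral_toReal_rnDeriv_mul_log_indicator hμν hs hμs, log_inv, diffEntropy]
    ring
  have hmass : ∫ x, q x ∂ν - ∫ x, p x ∂ν = 0 := by
    rw [integral_indicator_const _ hs, Measure.integral_toReal_rnDeriv hμν, smul_eq_mul,
      mul_inv_cancel₀ hL.ne', probReal_univ, sub_self]
  constructor
  · have := integral_mul_log_sub_le_integral_sub hp hq hpq hpi hqi hint hplogq
    linarith
  · intro heq
    refine eq_cond_of_toReal_rnDeriv_ae_eq_indicator hμν hs hν₀ ?_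
    exact ae_eq_of_integral_mul_log_sub_eq_integral_sub hp hq hpq hpi hqi hint hplogq
      (by rw [hcross, hmass, heq, sub_self])

end MaximumEntropy

theorem diffEntropy_map_of_measurePreserving {μ ν : Measure α} [SigmaFinite μ] [SigmaFinite ν]
    {ν' : Measure β} {f : α → β} (hf : MeasurableEmbedding f) (hfν : MeasurePreserving f ν ν') :
    diffEntropy (μ.map f) ν' = diffEntropy μ ν := by
  have hdens := hf.rnDeriv_map μ ν
  rw [hfν.map_eq] at hdens
  rw [diffEntropy, diffEntropy,
    ← hfν.integral_comp hf fun y => ((μ.map f).rnDeriv ν' y).toReal *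
      log ((μ.map f).rnDeriv ν' y).toReal]
  exact congrArg Neg.neg (integral_congr_ae (hdens.fun_comp fun r => r.toReal * log r.toReal))

namespace MeasurableEquiv

variable {G : Type*} [MeasurableSpace G] [AddGroup G] [MeasurableAdd₂ G] [MeasurableNeg G]

def shearAdd (f : β → G) (hf : Measurable f) : G × β ≃ᵐ G × β where
  toFun t := (t.1 + f t.2, t.2)
  invFun t := (t.1 - f t.2, t.2)
  left_inv t := by simp
  right_inv t := by simp
  measurable_toFun := (measurable_fst.add (hf.comp measurable_snd)).prodMk measurable_snd
  measurable_invFun := (measurable_fst.sub (hf.comp measurable_snd)).prodMk measurable_snd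

lemma measurePreserving_shearAdd {μ : Measure G} [SFinite μ] [μ.IsAddRightInvariant]
    {ν : Measure β} [SFinite ν] (f : β → G) (hf : Measurable f) :
    MeasurePreserving (shearAdd f hf) (μ.prod ν) (μ.prod ν) := by
  have hskew : MeasurePreserving (fun t : β × G => (t.1, t.2 + f t.1)) (ν.prod μ) (ν.prod μ) :=
    (MeasurePreserving.id ν).skew_product (measurable_snd.add (hf.comp measurable_fst))
      (ae_of_all _ fun b => (measurePreserving_add_right μ (f b)).map_eq)
  exact (Measure.measurePreserving_swap.comp hskew).comp Measure.measurePreserving_swap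

end MeasurableEquiv

section Marginals

variable {μ ν : Measure α} {ρ : Measure β} {g : α → β} {φ : β → ℝ}

lemma integrable_toReal_rnDeriv_mul_comp_iff [IsFiniteMeasure μ] [SigmaFinite ν] [SigmaFinite ρ]
    (hμν : μ ≪ ν) (hg : Measurable g) (hμρ : μ.map g ≪ ρ)
    (hφ : AEStronglyMeasurable φ (μ.map g)) :
    Integrable (fun x => (μ.rnDeriv ν x).toReal * φ (g x)) ν ↔
      Integrable (fun y => ((μ.map g).rnDeriv ρ y).toReal * φ y) ρ := by
  rw [integrable_toReal_rnDeriv_mul_iff hμν, integrable_toReal_rnDeriv_mul_iff hμρ,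
    integrable_map_measure hφ hg.aemeasurable]
  rfl

lemma integral_toReal_rnDeriv_mul_comp [IsFiniteMeasure μ] [SigmaFinite ν] [SigmaFinite ρ]
    (hμν : μ ≪ ν) (hg : Measurable g) (hμρ : μ.map g ≪ ρ)
    (hφ : AEStronglyMeasurable φ (μ.map g)) :
    ∫ x, (μ.rnDeriv ν x).toReal * φ (g x) ∂ν =
      ∫ y, ((μ.map g).rnDeriv ρ y).toReal * φ y ∂ρ := by
  rw [integral_toReal_rnDeriv_mul hμν, integral_toReal_rnDeriv_mul hμρ,
    integral_map hg.aemeasurable hφ]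

end Marginals

namespace MeasureTheory.Measure.AbsolutelyContinuous

variable {μ : Measure (α × β)} {ν₁ : Measure α} {ν₂ : Measure β}

lemma map_fst [SFinite ν₂] (h : μ ≪ ν₁.prod ν₂) : μ.map Prod.fst ≪ ν₁ :=
  (h.map measurable_fst).trans (by rw [map_fst_prod]; exact smul_absolutelyContinuous)

lemma map_snd [SFinite ν₂] (h : μ ≪ ν₁.prod ν₂) : μ.map Prod.snd ≪ ν₂ :=
  (h.map measurable_snd).trans (by rw [map_snd_prod]; exact smul_absolutelyContinuous)

end MeasureTheory.Measure.AbsolutelyContinuous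

section Subadditivity

variable {μ : Measure (α × β)} {ν₁ : Measure α} {ν₂ : Measure β} [SigmaFinite ν₁] [SigmaFinite ν₂]

lemma ae_toReal_rnDeriv_ne_zero_imp_marginals_pos [IsFiniteMeasure μ] (hμ : μ ≪ ν₁.prod ν₂) :
    ∀ᵐ t ∂ν₁.prod ν₂, (μ.rnDeriv (ν₁.prod ν₂) t).toReal ≠ 0 →
      0 < ((μ.map Prod.fst).rnDeriv ν₁ t.1).toReal ∧
        0 < ((μ.map Prod.snd).rnDeriv ν₂ t.2).toReal := by
  refine Measure.ae_toReal_rnDeriv_ne_zero_imp_of_ae ?_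
  filter_upwards
    [ae_of_ae_map measurable_fst.aemeasurable (Measure.ae_toReal_rnDeriv_pos hμ.map_fst),
    ae_of_ae_map measurable_snd.aemeasurable (Measure.ae_toReal_rnDeriv_pos hμ.map_snd)]
    with t h₁ h₂ using ⟨h₁, h₂⟩

theorem diffEntropy_le_diffEntropy_map_fst_add_map_snd [IsProbabilityMeasure μ] (hμ : μ ≪ ν₁.prod ν₂)
    (hint : Integrable (fun t => (μ.rnDeriv (ν₁.prod ν₂) t).toReal *
      log (μ.rnDeriv (ν₁.prod ν₂) t).toReal) (ν₁.prod ν₂))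
    (hint₁ : Integrable (fun a => ((μ.map Prod.fst).rnDeriv ν₁ a).toReal *
      log ((μ.map Prod.fst).rnDeriv ν₁ a).toReal) ν₁)
    (hint₂ : Integrable (fun b => ((μ.map Prod.snd).rnDeriv ν₂ b).toReal *
      log ((μ.map Prod.snd).rnDeriv ν₂ b).toReal) ν₂) :
    diffEntropy μ (ν₁.prod ν₂) ≤
      diffEntropy (μ.map Prod.fst) ν₁ + diffEntropy (μ.map Prod.snd) ν₂ := by
  have := Measure.isProbabilityMeasure_map (μ := μ) measurable_fst.aemeasurable
  have := Measure.isProbabilityMeasure_map (μ := μ) measurable_snd.aemeasurable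
  set p : α × β → ℝ := fun t => (μ.rnDeriv (ν₁.prod ν₂) t).toReal
  set p₁ : α → ℝ := fun a => ((μ.map Prod.fst).rnDeriv ν₁ a).toReal
  set p₂ : β → ℝ := fun b => ((μ.map Prod.snd).rnDeriv ν₂ b).toReal
  have hpos := ae_toReal_rnDeriv_ne_zero_imp_marginals_pos hμ
  have hlog₁ : AEStronglyMeasurable (fun a => log (p₁ a)) (μ.map Prod.fst) :=
    (measurable_log.comp (Measure.measurable_rnDeriv _ _).ennreal_toReal).aestronglyMeasurable
  have hlog₂ : AEStronglyMeasurable (fun b => log (p₂ b)) (μ.map Prod.snd) :=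
    (measurable_log.comp (Measure.measurable_rnDeriv _ _).ennreal_toReal).aestronglyMeasurable
  have hcross₁ := integral_toReal_rnDeriv_mul_comp hμ measurable_fst hμ.map_fst hlog₁
  have hcross₂ := integral_toReal_rnDeriv_mul_comp hμ measurable_snd hμ.map_snd hlog₂
  have hint₁' :=
    (integrable_toReal_rnDeriv_mul_comp_iff hμ measurable_fst hμ.map_fst hlog₁).mpr hint₁
  have hint₂' :=
    (integrable_toReal_rnDeriv_mul_comp_iff hμ measurable_snd hμ.map_snd hlog₂).mpr hint₂
  have hsplit : (fun t => p t * log (p₁ t.1 * p₂ t.2)) =ᵐ[ν₁.prod ν₂]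
      fun t => p t * log (p₁ t.1) + p t * log (p₂ t.2) := by
    filter_upwards [hpos] with t ht
    by_cases hp : p t = 0
    · simp [hp]
    · rw [log_mul (ht hp).1.ne' (ht hp).2.ne', mul_add]
  have hplogq : Integrable (fun t => p t * log (p₁ t.1 * p₂ t.2)) (ν₁.prod ν₂) :=
    (hint₁'.add hint₂').congr hsplit.symm
  have hgibbs := integral_mul_log_sub_le_integral_sub
    (ae_of_all _ fun _ => ENNReal.toReal_nonneg)
    (ae_of_all _ fun _ => mul_nonneg ENNReal.toReal_nonneg ENNReal.toReal_nonneg)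
    (hpos.mono fun t ht hq => by_contra fun hp => (mul_pos (ht hp).1 (ht hp).2).ne' hq)
    Measure.integrable_toReal_rnDeriv
    (Measure.integrable_toReal_rnDeriv.mul_prod Measure.integrable_toReal_rnDeriv) hint hplogq
  rw [integral_congr_ae hsplit, integral_add hint₁' hint₂', hcross₁, hcross₂,
    integral_prod_mul p₁ p₂, Measure.integral_toReal_rnDeriv hμ,
    Measure.integral_toReal_rnDeriv hμ.map_fst,
    Measure.integral_toReal_rnDeriv hμ.map_snd] at hgibbs
  simp only [probReal_univ, mul_one, sub_self] at hgibbs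
  rw [diffEntropy, diffEntropy, diffEntropy]
  linarith

end Subadditivity

end Entropy

section RandomVariables

variable {Ω E F : Type*} [MeasurableSpace Ω] [MeasureSpace E] [MeasureSpace F] {P : Measure Ω}

lemma dEnt_eq_diffEntropy_div_log_two (P : Measure Ω) (X : Ω → E) :
    dEnt P X = diffEntropy (P.map X) volume / log 2 := by
  rw [dEnt, diffEntropy, neg_div, ← integral_div]
  simp_rw [logb, mul_div_assoc]

lemma entWellDef.integrable_mul_log {X : Ω → E} (h : entWellDef P X) :
    Integrable (fun t => ((P.map X).rnDeriv volume t).toReal *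
      log ((P.map X).rnDeriv volume t).toReal) := by
  refine (h.2.mul_const (log 2)).congr (ae_of_all _ fun t => ?_)
  have : log 2 ≠ 0 := by positivity
  simp only [logb]
  field_simp

lemma mutInfo_nonneg [IsProbabilityMeasure P] [SigmaFinite (volume : Measure E)]
    [SigmaFinite (volume : Measure F)] {X : Ω → E} {Y : Ω → F}
    (hXY : entWellDef P (fun ω => (X ω, Y ω))) (hX : entWellDef P X) (hY : entWellDef P Y) :
    0 ≤ mutInfo P X Y := by
  have hpair := hXY.1.aemeasurable
  have := Measure.isProbabilityMeasure_map hpair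
  have hfst : (P.map fun ω => (X ω, Y ω)).map Prod.fst = P.map X :=
    AEMeasurable.map_map_of_aemeasurable measurable_fst.aemeasurable hpair
  have hsnd : (P.map fun ω => (X ω, Y ω)).map Prod.snd = P.map Y :=
    AEMeasurable.map_map_of_aemeasurable measurable_snd.aemeasurable hpair
  have h := diffEntropy_le_diffEntropy_map_fst_add_map_snd (ν₁ := volume) (ν₂ := volume)
    hXY.1.absolutelyContinuous hXY.integrable_mul_log
    (hfst ▸ hX.integrable_mul_log) (hsnd ▸ hY.integrable_mul_log)
  rw [hfst, hsnd] at h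
  rw [mutInfo, dEnt_eq_diffEntropy_div_log_two, dEnt_eq_diffEntropy_div_log_two,
    dEnt_eq_diffEntropy_div_log_two, ← add_div, ← sub_div]
  exact div_nonneg (sub_nonneg.mpr h) (by positivity)

lemma dEnt_sub_comp_prod {G : Type*} [MeasureSpace G] [AddGroup G] [MeasurableAdd₂ G]
    [MeasurableNeg G] [SigmaFinite (volume : Measure G)] [(volume : Measure G).IsAddRightInvariant]
    [SigmaFinite (volume : Measure F)] [IsFiniteMeasure P] {X : Ω → G} {Y : Ω → F}
    {f : F → G} (hf : Measurable f)
    (hpair : AEMeasurable (fun ω => (X ω - f (Y ω), Y ω)) P) :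
    dEnt P (fun ω => (X ω - f (Y ω), Y ω)) = dEnt P (fun ω => (X ω, Y ω)) := by
  have hshear : P.map (fun ω => (X ω, Y ω)) =
      (P.map fun ω => (X ω - f (Y ω), Y ω)).map (MeasurableEquiv.shearAdd f hf) := by
    rw [AEMeasurable.map_map_of_aemeasurable (MeasurableEquiv.measurable _).aemeasurable hpair]
    congr 1
    funext ω
    simp [MeasurableEquiv.shearAdd]
  rw [dEnt_eq_diffEntropy_div_log_two, dEnt_eq_diffEntropy_div_log_two, hshear,
    Measure.volume_eq_prod, diffEntropy_map_of_measurePreserving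
      (MeasurableEquiv.measurableEmbedding _) (MeasurableEquiv.measurePreserving_shearAdd f hf)]

end RandomVariables

section Support

variable {Ω : Type*} [MeasurableSpace Ω] {P : Measure Ω} {X : Ω → ℝ}

lemma mSupp_eq_support (P : Measure Ω) (X : Ω → ℝ) : mSupp P X = (P.map X).support := by
  ext x
  simp [mSupp, Measure.mem_support_iff_forall, pos_iff_ne_zero]

lemma measurableSet_mSupp : MeasurableSet (mSupp P X) := by
  rw [mSupp_eq_support]
  exact Measure.isClosed_support.measurableSet

lemma map_compl_mSupp : P.map X (mSupp P X)ᶜ = 0 := by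
  rw [mSupp_eq_support]
  exact Measure.measure_compl_support

variable [IsProbabilityMeasure P]

lemma volume_mSupp_ne_zero (hX : HasPDF X P) : volume (mSupp P X) ≠ 0 := fun h => by
  have := Measure.isProbabilityMeasure_map (μ := P) hX.aemeasurable
  have hone := (prob_compl_eq_zero_iff measurableSet_mSupp).mp (map_compl_mSupp (P := P) (X := X))
  rw [hX.absolutelyContinuous h] at hone
  exact zero_ne_one hone

lemma suppLen_pos (hX : HasPDF X P) (hS : IsCompact (mSupp P X)) : 0 < suppLen P X :=
  ENNReal.toReal_pos (volume_mSupp_ne_zero hX) hS.measure_lt_top.ne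

lemma diffEntropy_le_log_suppLen (hX : entWellDef P X) (hS : IsCompact (mSupp P X)) :
    diffEntropy (P.map X) volume ≤ log (suppLen P X) ∧
      (diffEntropy (P.map X) volume = log (suppLen P X) → UnifOnSupp P X) := by
  have := Measure.isProbabilityMeasure_map (μ := P) hX.1.aemeasurable
  exact diffEntropy_le_log_measureReal hX.1.absolutelyContinuous measurableSet_mSupp
    map_compl_mSupp hS.measure_lt_top.ne hX.integrable_mul_log

lemma dEnt_le_logb_suppLen (hX : entWellDef P X) (hS : IsCompact (mSupp P X)) :
    dEnt P X ≤ logb 2 (suppLen P X) := by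
  rw [dEnt_eq_diffEntropy_div_log_two, logb]
  exact div_le_div_of_nonneg_right (diffEntropy_le_log_suppLen hX hS).1 (by positivity)

lemma dEnt_eq_logb_suppLen_iff (hX : entWellDef P X) (hS : IsCompact (mSupp P X)) :
    dEnt P X = logb 2 (suppLen P X) ↔ UnifOnSupp P X := by
  rw [dEnt_eq_diffEntropy_div_log_two, logb, div_left_inj' (by positivity)]
  refine ⟨(diffEntropy_le_log_suppLen hX hS).2, fun hunif => ?_⟩
  rw [UnifOnSupp, pdf.IsUniform] at hunif
  rw [hunif]
  exact diffEntropy_cond_self measurableSet_mSupp (volume_mSupp_ne_zero hX.1) hS.measure_lt_top.ne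

end Support

theorem support_length_m_step_prediction_bound_general
    {Ω : Type*} [MeasurableSpace Ω] (P : Measure Ω) [IsProbabilityMeasure P]
    (x : ℕ → Ω → ℝ)
    (m : ℕ) (k : ℕ)
    (f : (Fin (k - m + 1) → ℝ) → ℝ) (hf : Measurable f)
    (past : Ω → Fin (k - m + 1) → ℝ)
    (e : Ω → ℝ) (he : e = fun ω => x k ω - f (past ω))
    -- the prediction error has a density with compact support
    (hcpt : IsCompact (mSupp P e))
    -- all differential entropies involved are well defined and finite
    (h₁ : entWellDef P e) (h₂ : entWellDef P past)
    (h₄ : entWellDef P (fun ω => (e ω, past ω))) :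
    suppLen P e ≥ (2 : ℝ) ^ condEnt P (x k) past ∧
      (suppLen P e = (2 : ℝ) ^ condEnt P (x k) past ↔
        UnifOnSupp P e ∧ mutInfo P e past = 0) := by
  have hshear : dEnt P (fun ω => (e ω, past ω)) = dEnt P (fun ω => (x k ω, past ω)) := by
    subst he
    exact dEnt_sub_comp_prod hf h₄.1.aemeasurable
  have hcond : condEnt P (x k) past = dEnt P e - mutInfo P e past := by
    rw [condEnt, mutInfo, ← hshear]
    ring
  have hL := suppLen_pos h₁.1 hcpt
  have hent := dEnt_le_logb_suppLen h₁ hcpt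
  have hI := mutInfo_nonneg h₄ h₁ h₂
  rw [hcond, eq_comm, Real.rpow_sub_eq_iff_of_le_logb one_lt_two hL hent hI,
    dEnt_eq_logb_suppLen_iff h₁ hcpt]
  exact ⟨Real.rpow_sub_le_of_le_logb one_lt_two hL hent hI, Iff.rfl⟩

/-- Theorem 4 of the paper: support-length bound for `m`-step
prediction, `|supp(x_k - x̂_k)| ≥ 2^{h(x_k | x_0,…,x_{k-m})}`, with equality iff the
prediction error is uniform and has zero mutual information with `x_0,…,x_{k-m}`. -/
theorem support_length_m_step_prediction_bound
    {Ω : Type*} [MeasurableSpace Ω] (P : Measure Ω) [IsProbabilityMeasure P]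
    (x : ℕ → Ω → ℝ) (hx : ∀ i, Measurable (x i))
    (m : ℕ) (hm : 1 ≤ m) (k : ℕ) (hk : m ≤ k)
    (f : (Fin (k - m + 1) → ℝ) → ℝ) (hf : Measurable f)
    (past : Ω → Fin (k - m + 1) → ℝ) (hpast : past = fun ω i => x i.1 ω)
    (e : Ω → ℝ) (he : e = fun ω => x k ω - f (past ω))
    -- the prediction error has a density with compact support
    (hpdf : HasPDF e P volume) (hcpt : IsCompact (mSupp P e))
    -- all differential entropies involved are well defined and finite
    (h₁ : entWellDef P e) (h₂ : entWellDef P past)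
    (h₃ : entWellDef P (fun ω => (x k ω, past ω)))
    (h₄ : entWellDef P (fun ω => (e ω, past ω))) :
    suppLen P e ≥ (2 : ℝ) ^ condEnt P (x k) past ∧
      (suppLen P e = (2 : ℝ) ^ condEnt P (x k) past ↔
        UnifOnSupp P e ∧ mutInfo P e past = 0) :=
  support_length_m_step_prediction_bound_general P x m k f hf past e he hcpt h₁ h₂ h₄
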